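/- arXiv:2005.11026 — 5 statements merged into one kernel-verified Lean document; each statement's English description precedes it below -/
import Mathlib

section
/- Let d be a demand vector on a capacitated undirected graph G=(V,E,c) that has exactly one target t (i.e., t is the unique vertex with d(t)>0). Then any flow f satisfying d can be decomposed into a family of flows {f_v : v a source of d} such that f(e)=Σ_v f_v(e) and |f(e)|=Σ_v |f_v(e)| for every edge e, and each f_v satisfies the demand vector d_v given by d_v(v)=d(v), d_v(t)=−d(v), and d_v(u)=0 for all other vertices u. -/
/-!
After reorienting every edge along the sign of `f` we may assume `f ≥ 0`. For a source `v`, no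
flow leaves the set of vertices reachable from `v` through edges with positive flow, so this set
has nonnegative net inflow and contains a vertex of positive net inflow, which can only be `t`.
Pushing flow along such a walk until `v`'s demand is met or an edge of the walk is saturated, and
recursing on the support of `f`, peels off a flow `p ≤ f` routing exactly `v`'s demand to `t`.
Peeling the sources one at a time, the last one keeps all remaining flow, circulations included.
All pieces are nonnegative, which gives `|f e| = ∑ v, |g v e|`.
-/

open Finset

/-- A flow `f` on an (arbitrarily oriented) undirected graph satisfies the
demand vector `d` if at every vertex the net inflow equals the demand. -/
def satisfiesFlow {V E : Type*} [Fintype E] [DecidableEq V]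
    (hd tl : E → V) (f : E → ℝ) (d : V → ℝ) : Prop :=
  ∀ v : V, d v = (∑ e : E, if hd e = v then f e else 0)
      - (∑ e : E, if tl e = v then f e else 0)

theorem exists_pos_smul_le_card_support_lt {E : Type*} [Fintype E] {f w : E → ℝ} (hf : 0 ≤ f)
    (hw : 0 ≤ w) (hw0 : w ≠ 0) (hwf : ∀ e, 0 < w e → 0 < f e) :
    ∃ β : ℝ, 0 < β ∧ β • w ≤ f ∧ #{e | (f - β • w) e ≠ 0} < #{e | f e ≠ 0} := by
  replace hw : ∀ e, 0 ≤ w e := hw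
  have hne : (univ.filter fun e => 0 < w e).Nonempty := by
    obtain ⟨e, he⟩ := Function.ne_iff.1 hw0
    exact ⟨e, by simpa using (hw e).lt_of_ne' he⟩
  -- the largest admissible `β` is `min (f e / w e)`, and it saturates the minimizing edge
  obtain ⟨e₀, he₀, hmin⟩ := exists_min_image _ (fun e => f e / w e) hne
  simp only [mem_filter, mem_univ, true_and] at he₀ hmin
  have hle : (f e₀ / w e₀) • w ≤ f := fun e => by
    rcases (hw e).eq_or_lt with h | h
    · simpa [← h] using hf e
    · simpa [le_div_iff₀ h] using hmin e h
  refine ⟨f e₀ / w e₀, div_pos (hwf e₀ he₀) he₀, hle, card_lt_card ⟨fun e => ?_, fun h => ?_⟩⟩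
  · simp only [mem_filter, mem_univ, true_and]
    intro he hfe
    have : w e = 0 := ((hw e).eq_of_not_lt fun h => (hwf e h).ne' hfe).symm
    simp [hfe, this] at he
  · have := mem_filter.1 (h (mem_filter.2 ⟨mem_univ e₀, (hwf e₀ he₀).ne'⟩))
    simp [div_mul_cancel₀ _ he₀.ne'] at this

theorem eq_smul_single_sub_single {V : Type*} [Fintype V] [DecidableEq V] {d : V → ℝ}
    (hd : ∑ u, d u = 0) {v t : V} (h : ∀ u ≠ v, u ≠ t → d u = 0) :
    d = d v • (Pi.single v 1 - Pi.single t 1) := by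
  by_cases hvt : v = t
  · subst hvt
    have hv : d v = 0 := by rwa [Fintype.sum_eq_single v fun u hu => h u hu hu] at hd
    funext u
    by_cases hu : u = v
    · simp [hu, hv]
    · simp [h u hu hu]
  · have ht : d t = -d v := by
      rw [Fintype.sum_eq_add v t hvt fun u hu => h u hu.1 hu.2] at hd
      linarith
    funext u
    by_cases hu : u = v
    · simp [hu, hvt]
    · by_cases hut : u = t
      · simp [hut, Ne.symm hvt, ht]
      · simp [hu, hut, h u hu hut]

section

variable {V E : Type*} [Fintype E] [DecidableEq V]

def netInflow (hd tl : E → V) : (E → ℝ) →ₗ[ℝ] V → ℝ :=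
  Fintype.linearCombination ℝ fun e => Pi.single (hd e) 1 - Pi.single (tl e) 1

variable {hd tl : E → V}

theorem satisfiesFlow_iff_netInflow_eq {f : E → ℝ} {d : V → ℝ} :
    satisfiesFlow hd tl f d ↔ netInflow hd tl f = d := by
  rw [satisfiesFlow, funext_iff]
  refine forall_congr' fun v => ?_
  simp [netInflow, Fintype.linearCombination_apply, Finset.sum_apply, Pi.single_apply,
    mul_sub, Finset.sum_sub_distrib, @eq_comm _ v, eq_comm (a := d v)]

theorem netInflow_single [DecidableEq E] (e : E) (x : ℝ) :
    netInflow hd tl (Pi.single e x) = x • (Pi.single (hd e) 1 - Pi.single (tl e) 1) :=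
  Fintype.linearCombination_apply_single ..

theorem sum_netInflow_eq (f : E → ℝ) (R : Finset V) :
    ∑ u ∈ R, netInflow hd tl f u
      = ∑ e, f e * ((if hd e ∈ R then 1 else 0) - (if tl e ∈ R then 1 else 0)) := by
  simp only [netInflow, Fintype.linearCombination_apply, Finset.sum_apply, Pi.smul_apply,
    Pi.sub_apply, smul_eq_mul]
  rw [Finset.sum_comm]
  simp [← Finset.mul_sum, Finset.sum_sub_distrib, Finset.sum_pi_single']

theorem sum_netInflow [Fintype V] (f : E → ℝ) : ∑ u, netInflow hd tl f u = 0 := by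
  simp [sum_netInflow_eq]

theorem netInflow_reorient (p : E → Prop) [DecidablePred p] (f : E → ℝ) :
    netInflow (fun e => if p e then hd e else tl e) (fun e => if p e then tl e else hd e) f
      = netInflow hd tl fun e => if p e then f e else -f e := by
  simp only [netInflow, Fintype.linearCombination_apply]
  refine Finset.sum_congr rfl fun e _ => ?_
  split_ifs <;> module

theorem sum_netInflow_nonneg_of_closed {f : E → ℝ} (hf : 0 ≤ f) {R : Finset V}
    (hR : ∀ e, tl e ∈ R → 0 < f e → hd e ∈ R) : 0 ≤ ∑ u ∈ R, netInflow hd tl f u := by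
  rw [sum_netInflow_eq]
  refine Finset.sum_nonneg fun e _ => ?_
  have hfe : 0 ≤ f e := hf e
  by_cases hh : hd e ∈ R <;> by_cases ht : tl e ∈ R
  · simp [hh, ht]
  · simp [hh, ht, hfe]
  · simp [hh, ht, (hfe.eq_or_lt.resolve_right fun h => hh (hR e ht h)).symm]
  · simp [hh, ht]

variable (hd tl) in
/-- A walk from `v` to `u` through edges with `0 < f e`, encoded by its vector `w` of edge
multiplicities. -/
def Reaches (f : E → ℝ) (v u : V) : Prop :=
  ∃ w : E → ℝ, 0 ≤ w ∧ (∀ e, 0 < w e → 0 < f e) ∧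
    netInflow hd tl w = Pi.single u 1 - Pi.single v 1

theorem Reaches.refl (f : E → ℝ) (v : V) : Reaches hd tl f v v :=
  ⟨0, le_rfl, by simp, by simp⟩

theorem Reaches.tail {f : E → ℝ} {v : V} {e : E} (h : Reaches hd tl f v (tl e)) (he : 0 < f e) :
    Reaches hd tl f v (hd e) := by
  classical
  obtain ⟨w, hw0, hwf, hw⟩ := h
  refine ⟨w + Pi.single e 1, add_nonneg hw0 ?_, fun e' he' => ?_, ?_⟩
  · simp [Pi.single_nonneg]
  · by_cases h : e' = e
    · exact h ▸ he
    · exact hwf e' (by simpa [h] using he')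
  · rw [map_add, hw, netInflow_single]
    module

theorem exists_reaches_netInflow_pos [Fintype V] {f : E → ℝ} (hf : 0 ≤ f) {v : V}
    (hv : netInflow hd tl f v < 0) : ∃ u, 0 < netInflow hd tl f u ∧ Reaches hd tl f v u := by
  classical
  by_contra! h
  set R := univ.filter (Reaches hd tl f v)
  have hclosed : ∀ e, tl e ∈ R → 0 < f e → hd e ∈ R := fun e he hfe => by
    simp only [R, mem_filter, mem_univ, true_and] at he ⊢
    exact he.tail hfe
  have hneg : ∑ u ∈ R, netInflow hd tl f u < ∑ u ∈ R, 0 :=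
    Finset.sum_lt_sum (fun u hu => not_lt.1 fun hu' => h u hu' (mem_filter.1 hu).2)
      ⟨v, by simp [R, Reaches.refl], hv⟩
  exact (sum_netInflow_nonneg_of_closed hf hclosed).not_gt (by simpa using hneg)

theorem exists_le_netInflow_eq_smul [Fintype V] {t v : V} (f : E → ℝ) (hf : 0 ≤ f)
    (ht : ∀ u ≠ t, netInflow hd tl f u ≤ 0) (hv : netInflow hd tl f v < 0) :
    ∃ p, 0 ≤ p ∧ p ≤ f ∧
      netInflow hd tl p = netInflow hd tl f v • (Pi.single v 1 - Pi.single t 1) := by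
  obtain ⟨u, hu, w, hw0, hwf, hw⟩ := exists_reaches_netInflow_pos hf hv
  obtain rfl : u = t := by_contra fun h => (ht u h).not_gt hu
  have hvt : v ≠ u := by rintro rfl; exact hv.not_gt hu
  have hw_ne : w ≠ 0 := by
    rintro rfl
    simpa [hvt.symm] using congrFun hw u
  obtain ⟨β, hβ, hβw, hcard⟩ := exists_pos_smul_le_card_support_lt hf hw0 hw_ne hwf
  by_cases hdone : -netInflow hd tl f v ≤ β
  · refine ⟨(-netInflow hd tl f v) • w, smul_nonneg (by linarith) hw0,
      (smul_le_smul_of_nonneg_right hdone hw0).trans hβw, ?_⟩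
    rw [map_smul, hw]
    module
  have hf' : netInflow hd tl (f - β • w)
      = netInflow hd tl f - β • (Pi.single u 1 - Pi.single v 1) := by
    rw [map_sub, map_smul, hw]
  have hf'v : netInflow hd tl (f - β • w) v = netInflow hd tl f v + β := by
    simp [hf', hvt]
  have ht' : ∀ x ≠ u, netInflow hd tl (f - β • w) x ≤ 0 := fun x hx => by
    by_cases hxv : x = v
    · subst hxv; linarith
    · simpa [hf', hx, hxv] using ht x hx
  obtain ⟨p, hp0, hpf, hp⟩ :=
    exists_le_netInflow_eq_smul (f - β • w) (sub_nonneg.2 hβw) ht' (by linarith)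
  refine ⟨p + β • w, add_nonneg hp0 (smul_nonneg hβ.le hw0), ?_, ?_⟩
  · calc p + β • w ≤ f - β • w + β • w := by gcongr
      _ = f := sub_add_cancel f _
  · rw [map_add, hp, hf'v, map_smul, hw]
    module
termination_by #{e | f e ≠ 0}
decreasing_by exact hcard

variable (hd tl) in
theorem exists_nonneg_decomposition [Fintype V] (t : V) {S : Finset V} (hS : S.Nonempty)
    (f : E → ℝ) (hf : 0 ≤ f) (htS : t ∉ S) (hneg : ∀ u ∈ S, netInflow hd tl f u < 0)
    (hzero : ∀ u ∉ S, u ≠ t → netInflow hd tl f u = 0) :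
    ∃ g : V → E → ℝ, (∀ v, 0 ≤ g v) ∧ ∑ v ∈ S, g v = f ∧
      ∀ v ∈ S, netInflow hd tl (g v) = netInflow hd tl f v • (Pi.single v 1 - Pi.single t 1) := by
  induction hS using Finset.Nonempty.cons_induction generalizing f with
  | singleton v =>
    refine ⟨fun _ => f, fun _ => hf, by simp, fun v' hv' => ?_⟩
    rw [mem_singleton.1 hv']
    exact eq_smul_single_sub_single (sum_netInflow f) fun u hu hut => hzero u (by simpa) hut
  | cons v S hvS hS ih =>
    have hvt : v ≠ t := by rintro rfl; exact htS (mem_cons_self v S)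
    have hnonpos : ∀ u ≠ t, netInflow hd tl f u ≤ 0 := fun u hut => by
      by_cases hu : u ∈ cons v S hvS
      · exact (hneg u hu).le
      · exact (hzero u hu hut).le
    obtain ⟨p, hp0, hpf, hp⟩ :=
      exists_le_netInflow_eq_smul f hf hnonpos (hneg v (mem_cons_self v S))
    have hrest : ∀ u ≠ v, u ≠ t → netInflow hd tl (f - p) u = netInflow hd tl f u := by
      intro u huv hut
      simp [map_sub, hp, huv, hut]
    have htS' : t ∉ S := fun h => htS (mem_cons_of_mem h)
    obtain ⟨g, hg0, hgS, hg⟩ := ih (f - p) (sub_nonneg.2 hpf) htS'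
      (fun u hu => by
        rw [hrest u (ne_of_mem_of_not_mem hu hvS) (ne_of_mem_of_not_mem hu htS')]
        exact hneg u (mem_cons_of_mem hu))
      (fun u hu hut => by
        by_cases huv : u = v
        · subst huv; simp [map_sub, hp, hvt]
        · rw [hrest u huv hut]
          exact hzero u (by simp [huv, hu]) hut)
    refine ⟨Function.update g v p, fun u => ?_, ?_, fun u hu => ?_⟩
    · by_cases huv : u = v
      · simpa [huv] using hp0
      · simpa [huv] using hg0 u
    · rw [sum_cons, Function.update_self, sum_congr rfl fun u hu =>
        Function.update_of_ne (ne_of_mem_of_not_mem hu hvS) p g, hgS, add_sub_cancel]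
    · rcases mem_cons.1 hu with rfl | hu
      · simpa using hp
      · have huv : u ≠ v := ne_of_mem_of_not_mem hu hvS
        rw [Function.update_of_ne huv, hg u hu, hrest u huv (ne_of_mem_of_not_mem hu htS')]

variable (hd tl) in
theorem exists_conformal_decomposition [Fintype V] (t : V) {S : Finset V} (hS : S.Nonempty)
    (f : E → ℝ) (htS : t ∉ S) (hneg : ∀ u ∈ S, netInflow hd tl f u < 0)
    (hzero : ∀ u ∉ S, u ≠ t → netInflow hd tl f u = 0) :
    ∃ g : V → E → ℝ, (∀ e, f e = ∑ v ∈ S, g v e) ∧ (∀ e, |f e| = ∑ v ∈ S, |g v e|) ∧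
      ∀ v ∈ S, netInflow hd tl (g v) = netInflow hd tl f v • (Pi.single v 1 - Pi.single t 1) := by
  have habs : netInflow (fun e => if 0 ≤ f e then hd e else tl e)
      (fun e => if 0 ≤ f e then tl e else hd e) (fun e => |f e|) = netInflow hd tl f := by
    rw [netInflow_reorient]
    congr 1
    funext e
    split_ifs with h
    · exact abs_of_nonneg h
    · exact abs_of_neg (not_le.1 h) ▸ neg_neg _
  obtain ⟨g, hg0, hgS, hg⟩ := exists_nonneg_decomposition (fun e => if 0 ≤ f e then hd e else tl e)
    (fun e => if 0 ≤ f e then tl e else hd e) t hS (fun e => |f e|) (fun e => abs_nonneg (f e))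
    htS (by simpa [habs] using hneg) (by simpa [habs] using hzero)
  have hgS' : ∀ e, ∑ v ∈ S, g v e = |f e| := fun e => by simpa using congrFun hgS e
  refine ⟨fun v e => if 0 ≤ f e then g v e else -g v e, fun e => ?_, fun e => ?_,
    fun v hv => ?_⟩
  · by_cases h : 0 ≤ f e
    · simp only [h, if_true, hgS', abs_of_nonneg h]
    · simp only [h, if_false, sum_neg_distrib, hgS', abs_of_neg (not_le.1 h), neg_neg]
  · rw [← hgS']
    refine sum_congr rfl fun v _ => ?_
    have : 0 ≤ g v e := hg0 v e
    by_cases h : 0 ≤ f e <;> simp [h, abs_of_nonneg this]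
  · rw [← netInflow_reorient, hg v hv, habs]

end

theorem flow_decomposition_general {V E : Type*} [Fintype V] [Fintype E] [DecidableEq V]
    (hd tl : E → V)
    (d : V → ℝ)
    (t : V) (ht : 0 < d t) (huniq : ∀ v, v ≠ t → d v ≤ 0)
    (f : E → ℝ) (hf : satisfiesFlow hd tl f d) :
    ∃ g : V → E → ℝ,
      (∀ e, f e = ∑ v ∈ univ.filter (fun v => d v < 0), g v e) ∧
      (∀ e, |f e| = ∑ v ∈ univ.filter (fun v => d v < 0), |g v e|) ∧
      ∀ v, d v < 0 → satisfiesFlow hd tl (g v)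
        (fun u => if u = v then d v else if u = t then -(d v) else 0) := by
  rw [satisfiesFlow_iff_netInflow_eq] at hf
  subst hf
  have hS : (univ.filter fun v => netInflow hd tl f v < 0).Nonempty := by
    obtain ⟨u, hu⟩ : ∃ u, netInflow hd tl f u < 0 := by
      by_contra! h
      have := single_le_sum (fun u _ => h u) (mem_univ t)
      exact (sum_netInflow (hd := hd) (tl := tl) f ▸ this).not_gt ht
    exact ⟨u, by simpa using hu⟩
  obtain ⟨g, hsum, habs, hg⟩ := exists_conformal_decomposition hd tl t hS f
    (by simpa using ht.le) (by simp)
    (fun u hu hut => by simpa using (huniq u hut).antisymm (by simpa using hu))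
  refine ⟨g, hsum, habs, fun v hv => ?_⟩
  rw [satisfiesFlow_iff_netInflow_eq, hg v (by simpa using hv)]
  have hvt : v ≠ t := by rintro rfl; exact hv.not_gt ht
  funext u
  by_cases huv : u = v
  · simp [huv, hvt]
  · by_cases hut : u = t
    · simp [hut, Ne.symm hvt]
    · simp [huv, hut]

/-- Lemma (canonical decomposition): if a demand vector `d` has exactly one target `t`
(the unique vertex with positive demand), then any flow satisfying `d` can be decomposed
into a family of flows, one for each source `v` (vertex with `d v < 0`), summing to `f`
both in value and in absolute value on every edge, where the flow of source `v`
satisfies the single-source single-target demand vector sending `|d v|` units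
from `v` to `t`. -/
theorem flow_decomposition {V E : Type*} [Fintype V] [Fintype E] [DecidableEq V]
    (hd tl : E → V) (c : E → ℝ) (hc : ∀ e, 0 ≤ c e)
    (d : V → ℝ) (hd0 : ∑ v : V, d v = 0)
    (t : V) (ht : 0 < d t) (huniq : ∀ v, v ≠ t → d v ≤ 0)
    (f : E → ℝ) (hf : satisfiesFlow hd tl f d) :
    ∃ g : V → E → ℝ,
      (∀ e, f e = ∑ v ∈ univ.filter (fun v => d v < 0), g v e) ∧
      (∀ e, |f e| = ∑ v ∈ univ.filter (fun v => d v < 0), |g v e|) ∧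
      ∀ v, d v < 0 → satisfiesFlow hd tl (g v)
        (fun u => if u = v then d v else if u = t then -(d v) else 0) :=
  flow_decomposition_general hd tl d t ht huniq f hf
end

section
/- Let G=(V,E,c) be a capacitated tree (connected acyclic undirected graph), d a supply vector on G, and v a median vertex for d. Then for every vertex w∈V and every flow f satisfying the demand vector d∘w, there exists a flow f' with |f'(e)| ≤ |f(e)| for every edge e that satisfies the demand vector d∘v. -/
/-!
On a tree a flow is determined by its demand: the flow on an edge `e` is the total demand on the
side of `e` containing its head. For the demand `d ∘ u` with `d ≤ 0` this makes `|f e|` the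
`|d|`-weight of the side of `e` not containing `u`. Moving the target from `w` to `v` changes this
only on edges separating `v` from `w`, where the weight of the side containing `v` is replaced by
that of the side containing `w`; the latter lies in one component of `G - v`, so the median
property bounds it by the former. A flow for `d ∘ v` exists at all because `d ∘ v - d ∘ w` is a
multiple of `1_v - 1_w`, which is carried by a walk from `w` to `v`.
-/

open Finset

/-- `assign s v` is the demand vector `s ∘ v` obtained from the supply vector `s`
by making `v` the target: it agrees with `s` off `v` and has value
`-∑_{u ≠ v} s u` at `v`. -/
def assign {V : Type*} [Fintype V] [DecidableEq V] (s : V → ℝ) (v : V) : V → ℝ :=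
  fun u => if u = v then -(∑ w ∈ univ.erase v, s w) else s u

/-- The optimum of the maximum concurrent multi-commodity flow problem for
demand vectors `d i` on the capacitated graph given by `hd`, `tl`, `c`:
the largest `l ≥ 0` such that some valid multi-commodity flow satisfies `l • d i`
for all `i`. -/
noncomputable def lamD {V E ι : Type*} [Fintype V] [Fintype E] [Fintype ι] [DecidableEq V]
    (hd tl : E → V) (c : E → ℝ) (d : ι → V → ℝ) : ℝ :=
  sSup {l : ℝ | 0 ≤ l ∧ ∃ f : ι → E → ℝ,
    (∀ e, ∑ i, |f i e| ≤ c e) ∧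
    ∀ i, satisfiesFlow hd tl (f i) (fun v => l * d i v)}

/-- The optimum of the target location problem LoMuF for supply vectors `s i`:
the best value of `lamD` over all choices of targets. -/
noncomputable def lamS {V E ι : Type*} [Fintype V] [Fintype E] [Fintype ι] [DecidableEq V]
    (hd tl : E → V) (c : E → ℝ) (s : ι → V → ℝ) : ℝ :=
  sSup {l : ℝ | 0 ≤ l ∧ ∃ (v : ι → V) (f : ι → E → ℝ),
    (∀ e, ∑ i, |f i e| ≤ c e) ∧
    ∀ i, satisfiesFlow hd tl (f i) (fun u => l * assign (s i) (v i) u)}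

open scoped Classical in
/-- `v` is a median vertex of the graph `G` for the (supply) vector `d`:
for every connected component `C` of `G - v`, the total `|d|`-weight of `C`
is at most the total `|d|`-weight of its complement. -/
def IsMedian {V : Type*} [Fintype V] (G : SimpleGraph V) (d : V → ℝ) (v : V) : Prop :=
  ∀ C : (G.induce {w | w ≠ v}).ConnectedComponent,
    (∑ x : V, if h : x ≠ v then
        (if (G.induce {w | w ≠ v}).connectedComponentMk ⟨x, h⟩ = C then |d x| else 0)
      else 0)
    ≤ ∑ x : V, if h : x ≠ v then
        (if (G.induce {w | w ≠ v}).connectedComponentMk ⟨x, h⟩ = C then 0 else |d x|)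
      else |d x|

open SimpleGraph

namespace satisfiesFlow

variable {V E : Type*} [Fintype E] [DecidableEq V] {hd tl : E → V} {f g : E → ℝ} {a b : V → ℝ}

lemma add (hf : satisfiesFlow hd tl f a) (hg : satisfiesFlow hd tl g b) :
    satisfiesFlow hd tl (f + g) (a + b) := by
  intro x
  simp only [Pi.add_apply, hf x, hg x, ite_add_zero, sum_add_distrib]
  ring

lemma smul (hf : satisfiesFlow hd tl f a) (t : ℝ) : satisfiesFlow hd tl (t • f) (t • a) := by
  intro x
  simp only [Pi.smul_apply, smul_eq_mul, hf x, mul_sub, mul_sum, mul_ite, mul_zero]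

lemma single [DecidableEq E] (e : E) :
    satisfiesFlow hd tl (Pi.single e 1) (Pi.single (hd e) 1 - Pi.single (tl e) 1) := by
  intro x
  rw [sum_eq_single e (by simp_all), sum_eq_single e (by simp_all)] <;>
    simp [Pi.single_apply, eq_comm]

lemma sum_eq_inflow_sub_outflow (hf : satisfiesFlow hd tl f b) (S : Finset V) :
    ∑ x ∈ S, b x = (∑ e, if hd e ∈ S then f e else 0) - ∑ e, if tl e ∈ S then f e else 0 := by
  rw [sum_congr rfl fun x _ => hf x, sum_sub_distrib]
  congr 1 <;> rw [sum_comm] <;> simp only [sum_ite_eq]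

end satisfiesFlow

lemma exists_satisfiesFlow_of_reachable {V E : Type*} [Fintype E] [DecidableEq V]
    {G : SimpleGraph V} {hd tl : E → V}
    (hadj : ∀ u v, G.Adj u v → ∃ e, (tl e = u ∧ hd e = v) ∨ (tl e = v ∧ hd e = u))
    {u v : V} (h : G.Reachable u v) :
    ∃ g, satisfiesFlow hd tl g (Pi.single v 1 - Pi.single u 1) := by
  classical
  obtain ⟨p⟩ := h
  induction p with
  | nil => exact ⟨0, fun x => by simp⟩
  | @cons x y z hxy p ih =>
    obtain ⟨g, hg⟩ := ih
    obtain ⟨e, ⟨rfl, rfl⟩ | ⟨rfl, rfl⟩⟩ := hadj x y hxy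
    · exact ⟨_, by convert (satisfiesFlow.single e).add hg using 1; abel⟩
    · exact ⟨_, by convert ((satisfiesFlow.single e).smul (-1)).add hg using 1; module⟩

namespace SimpleGraph

variable {V : Type*} {G H : SimpleGraph V}

lemma Connected.reachable_deleteEdges_or (hG : G.Connected) (a b x : V) :
    (G.deleteEdges {s(a, b)}).Reachable a x ∨ (G.deleteEdges {s(a, b)}).Reachable b x := by
  obtain ⟨p⟩ := hG.preconnected a x
  suffices ∀ {y z : V} (q : G.Walk y z),
      (G.deleteEdges {s(a, b)}).Reachable a y ∨ (G.deleteEdges {s(a, b)}).Reachable b y →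
      (G.deleteEdges {s(a, b)}).Reachable a z ∨ (G.deleteEdges {s(a, b)}).Reachable b z from
    this p (.inl .rfl)
  intro y z q
  induction q with
  | nil => exact id
  | @cons y y' z hyy' q ih =>
    refine fun hy => ih ?_
    by_cases he : s(y, y') = s(a, b)
    · rcases Sym2.eq_iff.1 he with ⟨-, rfl⟩ | ⟨-, rfl⟩
      exacts [.inr .rfl, .inl .rfl]
    · have hadj : (G.deleteEdges {s(a, b)}).Adj y y' := deleteEdges_adj.2 ⟨hyy', he⟩
      exact hy.imp (·.trans hadj.reachable) (·.trans hadj.reachable)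

lemma reachable_iff_iff_of_two_sides {a b : V} (hab : ¬ H.Reachable a b)
    (hcover : ∀ x, H.Reachable a x ∨ H.Reachable b x) {u x : V} :
    (H.Reachable b x ↔ H.Reachable b u) ↔ H.Reachable u x := by
  refine ⟨fun h => ?_, fun hux => ⟨fun hbx => hbx.trans hux.symm, fun hbu => hbu.trans hux⟩⟩
  rcases hcover u with hau | hbu
  · have hbx : ¬ H.Reachable b x := fun hbx => hab (hau.trans (h.1 hbx).symm)
    exact hau.symm.trans ((hcover x).resolve_right hbx)
  · exact hbu.symm.trans (h.2 hbu)

lemma reachable_induce_compl_singleton (hHG : H ≤ G) {a v x : V} (hav : ¬ H.Reachable a v)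
    (hax : H.Reachable a x) (ha : a ≠ v) (hx : x ≠ v) :
    (G.induce {w | w ≠ v}).Reachable ⟨a, ha⟩ ⟨x, hx⟩ := by
  classical
  obtain ⟨p⟩ := hax
  refine ⟨(p.mapLe hHG).induce {w | w ≠ v} fun y hy => ?_⟩
  rw [Walk.support_mapLe_eq_support] at hy
  exact fun hyv => hav (hyv ▸ ⟨p.takeUntil y hy⟩)

end SimpleGraph

lemma IsMedian.sum_abs_reachable_le {V : Type*} [Fintype V] {G H : SimpleGraph V}
    {d : V → ℝ} {v : V} (hv : IsMedian G d v) (hHG : H ≤ G) {a : V}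
    [DecidablePred (H.Reachable a)] (hav : ¬ H.Reachable a v) :
    ∑ x with H.Reachable a x, |d x| ≤ ∑ x with ¬ H.Reachable a x, |d x| := by
  have ha : a ≠ v := fun h => hav (h ▸ .rfl)
  set C := (G.induce {w | w ≠ v}).connectedComponentMk ⟨a, ha⟩
  have hC : ∀ x (hax : H.Reachable a x) (hx : x ≠ v),
      (G.induce {w | w ≠ v}).connectedComponentMk ⟨x, hx⟩ = C := fun x hax hx =>
    (ConnectedComponent.sound (reachable_induce_compl_singleton hHG hav hax ha hx)).symm
  rw [sum_filter, sum_filter]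
  refine (sum_le_sum fun x _ => ?_).trans ((hv C).trans (sum_le_sum fun x _ => ?_))
  all_goals
    by_cases hax : H.Reachable a x
    · have hx : x ≠ v := fun h => hav (h ▸ hax)
      simp [hax, hx, hC x hax hx]
    · split_ifs <;> simp

section assign

variable {V : Type*} [Fintype V] [DecidableEq V] {s : V → ℝ}

lemma assign_eq_sub (s : V → ℝ) (u : V) : assign s u = s - (∑ x, s x) • Pi.single u 1 := by
  ext x
  by_cases hx : x = u
  · subst hx
    simp [assign, sum_erase_eq_sub]
  · simp [assign, hx]

lemma abs_sum_assign (hs : ∀ x, s x ≤ 0) (S : Finset V) (u : V) :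
    |∑ x ∈ S, assign s u x| = ∑ x with ¬ (x ∈ S ↔ u ∈ S), |s x| := by
  have habs : ∀ T : Finset V, |∑ x ∈ T, s x| = ∑ x ∈ T, |s x| := fun T => by
    rw [abs_of_nonpos (sum_nonpos fun x _ => hs x), ← sum_neg_distrib]
    exact sum_congr rfl fun x _ => (abs_of_nonpos (hs x)).symm
  have hsplit := sum_filter_add_sum_filter_not univ (· ∈ S) s
  simp only [assign_eq_sub, Pi.sub_apply, Pi.smul_apply, smul_eq_mul, sum_sub_distrib,
    ← mul_sum, sum_pi_single']
  by_cases hu : u ∈ S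
  · simp only [hu, iff_true, if_true, mul_one]
    rw [← hsplit, ← habs]
    simp
  · simp only [hu, iff_false, not_not, if_false, mul_zero, sub_zero]
    simp [habs]

end assign

lemma SimpleGraph.IsAcyclic.not_reachable_deleteEdges {V : Type*} {G : SimpleGraph V}
    (hG : G.IsAcyclic) {a b : V} (hab : G.Adj a b) : ¬ (G.deleteEdges {s(a, b)}).Reachable a b :=
  isBridge_iff.1 (isAcyclic_iff_forall_adj_isBridge.1 hG hab)

section TreeFlows

variable {V E : Type*} {G : SimpleGraph V} {hd tl : E → V} (hedge : ∀ e, G.Adj (tl e) (hd e))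
  (hinj : ∀ e e', ((tl e = tl e' ∧ hd e = hd e') ∨ (tl e = hd e' ∧ hd e = tl e')) → e = e')
include hedge hinj

lemma adj_deleteEdges_of_ne {e e' : E} (hne : e' ≠ e) :
    (G.deleteEdges {s(tl e, hd e)}).Adj (tl e') (hd e') :=
  deleteEdges_adj.2 ⟨hedge e', fun h => hne (hinj e' e (Sym2.eq_iff.1 h))⟩

variable [Fintype V] [Fintype E] [DecidableEq V]

lemma satisfiesFlow.eq_sum_reachable_deleteEdges (hG : G.IsAcyclic) {f : E → ℝ} {b : V → ℝ}
    (hf : satisfiesFlow hd tl f b) (e : E)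
    [DecidablePred ((G.deleteEdges {s(tl e, hd e)}).Reachable (hd e))] :
    f e = ∑ x with (G.deleteEdges {s(tl e, hd e)}).Reachable (hd e) x, b x := by
  rw [hf.sum_eq_inflow_sub_outflow, ← sum_sub_distrib, sum_eq_single e]
  · have hbridge : ¬ (G.deleteEdges {s(tl e, hd e)}).Reachable (hd e) (tl e) :=
      fun h => hG.not_reachable_deleteEdges (hedge e) h.symm
    simp [hbridge]
  · intro e' _ hne
    have h := (adj_deleteEdges_of_ne hedge hinj hne).reachable
    have : (G.deleteEdges {s(tl e, hd e)}).Reachable (hd e) (hd e') ↔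
        (G.deleteEdges {s(tl e, hd e)}).Reachable (hd e) (tl e') :=
      ⟨fun h' => h'.trans h.symm, fun h' => h'.trans h⟩
    simp [this]
  · simp

lemma satisfiesFlow.abs_eq_sum_not_reachable_deleteEdges (hT : G.IsTree) {s : V → ℝ}
    (hs : ∀ x, s x ≤ 0) {u : V} {f : E → ℝ} (hf : satisfiesFlow hd tl f (assign s u)) (e : E)
    [DecidableRel (G.deleteEdges {s(tl e, hd e)}).Reachable] :
    |f e| = ∑ x with ¬ (G.deleteEdges {s(tl e, hd e)}).Reachable u x, |s x| := by
  rw [hf.eq_sum_reachable_deleteEdges hedge hinj hT.2, abs_sum_assign hs]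
  refine sum_congr (filter_congr fun x _ => ?_) fun _ _ => rfl
  simp [reachable_iff_iff_of_two_sides (hT.2.not_reachable_deleteEdges (hedge e))
    (hT.1.reachable_deleteEdges_or _ _)]

end TreeFlows

theorem tree_median_reroute_general {V E : Type*} [Fintype V] [Fintype E] [DecidableEq V]
    (G : SimpleGraph V) (hT : G.IsTree)
    (hd tl : E → V)
    (hadj : ∀ u v, G.Adj u v ↔ ∃ e, (tl e = u ∧ hd e = v) ∨ (tl e = v ∧ hd e = u))
    (hinj : ∀ e e', ((tl e = tl e' ∧ hd e = hd e') ∨ (tl e = hd e' ∧ hd e = tl e'))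
        → e = e')
    (d : V → ℝ) (hdle : ∀ u, d u ≤ 0)
    (v : V) (hv : IsMedian G d v)
    (w : V) (f : E → ℝ) (hf : satisfiesFlow hd tl f (assign d w)) :
    ∃ f' : E → ℝ, (∀ e, |f' e| ≤ |f e|) ∧ satisfiesFlow hd tl f' (assign d v) := by
  classical
  have hedge : ∀ e, G.Adj (tl e) (hd e) := fun e => (hadj _ _).2 ⟨e, .inl ⟨rfl, rfl⟩⟩
  obtain ⟨g, hg⟩ := exists_satisfiesFlow_of_reachable (fun u v => (hadj u v).1)
    (hT.1.preconnected w v)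
  have hf' : satisfiesFlow hd tl (f + (-∑ x, d x) • g) (assign d v) := by
    convert hf.add (hg.smul _) using 1
    rw [assign_eq_sub, assign_eq_sub]
    module
  refine ⟨_, fun e => ?_, hf'⟩
  rw [hf'.abs_eq_sum_not_reachable_deleteEdges hedge hinj hT hdle,
    hf.abs_eq_sum_not_reachable_deleteEdges hedge hinj hT hdle]
  set H := G.deleteEdges {s(tl e, hd e)}
  have hsides {u x : V} : (H.Reachable (hd e) x ↔ H.Reachable (hd e) u) ↔ H.Reachable u x :=
    reachable_iff_iff_of_two_sides (hT.2.not_reachable_deleteEdges (hedge e))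
      (hT.1.reachable_deleteEdges_or _ _)
  by_cases hvw : H.Reachable v w
  · exact (sum_congr (filter_congr fun x _ => not_congr
      ⟨fun hvx => hvw.symm.trans hvx, fun hwx => hvw.trans hwx⟩) fun _ _ => rfl).le
  · refine le_trans ?_ (hv.sum_abs_reachable_le (deleteEdges_le _) fun hwv => hvw hwv.symm)
    refine sum_le_sum_of_subset_of_nonneg (fun x hvx => ?_) fun x _ _ => abs_nonneg _
    simp only [mem_filter, mem_univ, true_and] at hvx ⊢
    have hw := (@hsides v w).not.2 hvw
    have hx := (@hsides v x).not.2 hvx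
    exact hsides.1 (by tauto)

/-- Lemma (rerouting to a median on a tree): let `G` be a tree (presented with an
arbitrarily oriented edge type `E` via `hd`, `tl`), `d` a supply vector and `v` a
median vertex for `d`. Then for every vertex `w` and every flow `f` satisfying the
demand vector `d ∘ w`, there is a flow `f'` edgewise dominated by `f` that
satisfies `d ∘ v`. -/
theorem tree_median_reroute {V E : Type*} [Fintype V] [Fintype E] [DecidableEq V]
    (G : SimpleGraph V) (hT : G.IsTree)
    (hd tl : E → V)
    (hloop : ∀ e, tl e ≠ hd e)
    (hadj : ∀ u v, G.Adj u v ↔ ∃ e, (tl e = u ∧ hd e = v) ∨ (tl e = v ∧ hd e = u))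
    (hinj : ∀ e e', ((tl e = tl e' ∧ hd e = hd e') ∨ (tl e = hd e' ∧ hd e = tl e'))
        → e = e')
    (c : E → ℝ) (hc : ∀ e, 0 ≤ c e)
    (d : V → ℝ) (hdle : ∀ u, d u ≤ 0)
    (v : V) (hv : IsMedian G d v)
    (w : V) (f : E → ℝ) (hf : satisfiesFlow hd tl f (assign d w)) :
    ∃ f' : E → ℝ, (∀ e, |f' e| ≤ |f e|) ∧ satisfiesFlow hd tl f' (assign d v) :=
  tree_median_reroute_general G hT hd tl hadj hinj d hdle v hv w f hf
end

section
/- Let d be a supply vector on a capacitated undirected graph G=(V,E,c) whose source set S satisfies |S|>1, let θ be a real number with θ ≥ |S| (so θ ≥ 2), and let w ∈ argmax_{v∈V} |d(v)| be a master source of d. Then for every vertex u∈V and every flow f satisfying the demand vector d∘u, there exists a flow f' with |f'(e)| ≤ |f(e)| for every edge e that satisfies the demand vector (1/(θ−1))·(d∘w). -/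
/-!
Since `d ≤ 0`, the flow `f` has `u` as its only sink and `w` sends out `|d w|`; a cut argument
gives a walk from `w` to `u` along which `f` flows, and peeling off saturated multiples of such
walks yields a subflow `h` of `f`, conformal to it, carrying `|d w|` from `w` to `u`.
As `d ∘ w - d ∘ u = (∑ d) • (𝟙_u - 𝟙_w)`, the flow `l • f - κ • h` with `l = 1/(θ-1)` and
`κ = l (∑ d) / d w` satisfies `l • (d ∘ w)`. It is dominated by `f` as soon as `0 ≤ κ ≤ 1 + l`,
and the upper bound is `-∑ d ≤ |S| |d w| ≤ θ |d w|`, which is where the master source enters.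
-/

open Finset

section NetFlow

variable {V E : Type*} [Fintype E] [DecidableEq V] (hd tl : E → V)

def netFlow : (E → ℝ) →ₗ[ℝ] V → ℝ where
  toFun f v := (∑ e, if hd e = v then f e else 0) - ∑ e, if tl e = v then f e else 0
  map_add' f g := by
    ext v
    simp only [Pi.add_apply, ite_add_zero, sum_add_distrib]
    ring
  map_smul' a f := by
    ext v
    simp only [Pi.smul_apply, smul_eq_mul, RingHom.id_apply, mul_sub, mul_sum, mul_ite, mul_zero]

theorem netFlow_apply (f : E → ℝ) (v : V) :
    netFlow hd tl f v = (∑ e, if hd e = v then f e else 0) - ∑ e, if tl e = v then f e else 0 :=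
  rfl

theorem satisfiesFlow_iff {f : E → ℝ} {d : V → ℝ} :
    satisfiesFlow hd tl f d ↔ netFlow hd tl f = d := by
  rw [funext_iff]
  exact forall_congr' fun v => eq_comm

theorem netFlow_single [DecidableEq E] (e : E) (a : ℝ) :
    netFlow hd tl (Pi.single e a) = a • (Pi.single (hd e) 1 - Pi.single (tl e) 1) := by
  have sum_single (p : E → V) (v : V) :
      (∑ x, if p x = v then Pi.single e a x else 0) = if p e = v then a else 0 :=
    (Fintype.sum_eq_single e fun x hx => by simp [hx]).trans (by simp)
  ext v
  rw [netFlow_apply, sum_single, sum_single]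
  simp [Pi.single_apply, eq_comm, mul_sub]

theorem sum_netFlow (g : E → ℝ) (R : Finset V) :
    ∑ v ∈ R, netFlow hd tl g v
      = ∑ e, ((if hd e ∈ R then g e else 0) - if tl e ∈ R then g e else 0) := by
  simp only [netFlow_apply, sum_sub_distrib]
  rw [sum_comm, sum_comm (s := R)]
  simp [sum_ite_eq]

end NetFlow

section Interval

variable {K : Type*} [Field K] [LinearOrder K] [IsStrictOrderedRing K]

theorem mul_mem_uIcc_zero_of_le_div {m x c : K} (hm : 0 < m * x) (hc0 : 0 ≤ c)
    (hc : c ≤ x / m) : c * m ∈ Set.uIcc 0 x := by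
  rw [Set.mem_uIcc]
  rcases pos_and_pos_or_neg_and_neg_of_mul_pos hm with ⟨hm, hx⟩ | ⟨hm, hx⟩
  · exact .inl ⟨mul_nonneg hc0 hm.le, (le_div_iff₀ hm).1 hc⟩
  · exact .inr ⟨(le_div_iff_of_neg hm).1 hc, mul_nonpos_of_nonneg_of_nonpos hc0 hm.le⟩

theorem add_mem_uIcc_zero {a b x : K} (ha : a ∈ Set.uIcc 0 x) (hb : b ∈ Set.uIcc 0 (x - a)) :
    a + b ∈ Set.uIcc 0 x := by
  simp only [Set.mem_uIcc] at *
  rcases ha with ⟨h1, h2⟩ | ⟨h1, h2⟩ <;> rcases hb with ⟨h3, h4⟩ | ⟨h3, h4⟩ <;>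
    first | exact .inl ⟨by linarith, by linarith⟩ | exact .inr ⟨by linarith, by linarith⟩

theorem abs_mul_sub_mul_le {h x l κ : K} (hh : h ∈ Set.uIcc 0 x) (hl0 : 0 ≤ l) (hl1 : l ≤ 1)
    (hκ0 : 0 ≤ κ) (hκ1 : κ ≤ 1 + l) : |l * x - κ * h| ≤ |x| := by
  rw [Set.mem_uIcc] at hh
  rcases hh with ⟨h0, hx⟩ | ⟨hx, h0⟩
  · rw [abs_of_nonneg (h0.trans hx), abs_le]
    constructor <;> nlinarith
  · rw [abs_of_nonpos (hx.trans h0), abs_le]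
    constructor <;> nlinarith

end Interval

section Conformal

variable {E : Type*}

def IsConformal (h g : E → ℝ) : Prop :=
  ∀ e, h e ∈ Set.uIcc 0 (g e)

def IsAligned (m g : E → ℝ) : Prop :=
  ∀ e, m e ≠ 0 → 0 < m e * g e

theorem IsAligned.exists_saturating_smul [Fintype E] {g m : E → ℝ} (hm : IsAligned m g)
    (hm0 : m ≠ 0) :
    ∃ c > 0, (∀ c' ∈ Set.Icc 0 c, IsConformal (c' • m) g) ∧ ∃ e, g e ≠ 0 ∧ c * m e = g e := by
  classical
  obtain ⟨e₀, he₀⟩ := Function.ne_iff.1 hm0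
  obtain ⟨e₁, he₁, hmin⟩ := exists_min_image {e | m e ≠ 0} (fun e => g e / m e) ⟨e₀, by simpa⟩
  rw [mem_filter_univ] at he₁
  have hpos := hm e₁ he₁
  refine ⟨g e₁ / m e₁, ?_, fun c' hc' e => ?_, e₁, ?_, div_mul_cancel₀ _ he₁⟩
  · exact div_pos_iff.2 ((pos_and_pos_or_neg_and_neg_of_mul_pos hpos).imp And.symm And.symm)
  · by_cases he : m e = 0
    · simp [he]
    · exact mul_mem_uIcc_zero_of_le_div (hm e he) hc'.1
        (hc'.2.trans (hmin e ((mem_filter_univ e).2 he)))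
  · rintro h0
    simp [h0] at hpos

theorem IsAligned.card_support_sub_smul_lt [Fintype E] {g m : E → ℝ} (hm : IsAligned m g)
    {c : ℝ} {e₀ : E} (he₀ : g e₀ ≠ 0) (hc : c * m e₀ = g e₀) :
    #{e | (g - c • m) e ≠ 0} < #{e | g e ≠ 0} := by
  refine card_lt_card ((ssubset_iff_of_subset fun e => ?_).2 ⟨e₀, ?_⟩)
  · simp only [mem_filter_univ, Pi.sub_apply, Pi.smul_apply, smul_eq_mul]
    intro he hge
    have : m e = 0 := by
      by_contra hme
      simpa [hge] using hm e hme
    simp [hge, this] at he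
  · simp [he₀, hc]

end Conformal

section Decomposition

variable {V E : Type*} [Fintype V] [Fintype E] [DecidableEq V] {hd tl : E → V}

theorem exists_isAligned_netFlow_eq_single_sub_single {g : E → ℝ} {u w : V}
    (hw : netFlow hd tl g w < 0) (hg : ∀ v ≠ u, netFlow hd tl g v ≤ 0) :
    ∃ m, IsAligned m g ∧ netFlow hd tl m = Pi.single u 1 - Pi.single w 1 := by
  classical
  by_contra hu
  -- the vertices reachable from `w` by walks that traverse edges in the direction of `g`
  set R : Finset V :=
    {v | ∃ m, IsAligned m g ∧ netFlow hd tl m = Pi.single v 1 - Pi.single w 1}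
  have hwR : w ∈ R := mem_filter.2 ⟨mem_univ _, 0, by simp [IsAligned], by simp⟩
  have huR : u ∉ R := fun h => hu (mem_filter.1 h).2
  have step {x y : V} (hx : x ∈ R) (e : E) (a : ℝ) (hpos : 0 < a * g e)
      (hxy : a • (Pi.single (hd e) 1 - Pi.single (tl e) 1 : V → ℝ) =
        Pi.single y 1 - Pi.single x 1) :
      y ∈ R := by
    obtain ⟨m, hm, hmx⟩ := (mem_filter.1 hx).2
    refine mem_filter.2 ⟨mem_univ _, m + Pi.single e a, fun e' he' => ?_, ?_⟩
    · by_cases he : e' = e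
      · subst he
        have : 0 ≤ m e' * g e' := by
          by_cases h0 : m e' = 0
          · simp [h0]
          · exact (hm e' h0).le
        simpa [add_mul] using add_pos_of_nonneg_of_pos this hpos
      · simp only [Pi.add_apply, Pi.single_eq_of_ne he, add_zero] at he' ⊢
        exact hm e' he'
    · rw [map_add, hmx, netFlow_single, hxy]
      abel
  -- by `step`, `g` sends nothing out of `R`
  have hcut : 0 ≤ ∑ v ∈ R, netFlow hd tl g v := by
    rw [sum_netFlow]
    refine sum_nonneg fun e _ => ?_
    by_cases hh : hd e ∈ R <;> by_cases ht : tl e ∈ R <;> simp only [hh, ht, if_true, if_false]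
    · simp
    · by_contra hneg
      exact ht (step hh e (-1) (by linarith) (by simp))
    · by_contra hneg
      exact hh (step ht e 1 (by linarith) (by simp))
    · simp
  have hR : ∑ v ∈ R, netFlow hd tl g v < 0 := by
    rw [← add_sum_erase R _ hwR]
    have : ∑ v ∈ R.erase w, netFlow hd tl g v ≤ 0 :=
      sum_nonpos fun v hv => hg v fun hvu => huR (hvu ▸ mem_of_mem_erase hv)
    linarith
  linarith

theorem exists_isConformal_netFlow_eq_smul (g : E → ℝ) {u w : V} (hwu : w ≠ u)
    (hg : ∀ v ≠ u, netFlow hd tl g v ≤ 0) (t : ℝ) (ht0 : 0 ≤ t) (ht : t ≤ -netFlow hd tl g w) :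
    ∃ h, IsConformal h g ∧ netFlow hd tl h = t • (Pi.single u 1 - Pi.single w 1) := by
  classical
  rcases ht0.eq_or_lt with rfl | htpos
  · exact ⟨0, fun e => by simp, by simp⟩
  obtain ⟨m, hm, hmnet⟩ := exists_isAligned_netFlow_eq_single_sub_single (by linarith) hg
  have hm0 : m ≠ 0 := by
    rintro rfl
    simpa [hwu.symm] using congrFun hmnet u
  obtain ⟨c, hc0, hconf, e₀, hge₀, hce₀⟩ := hm.exists_saturating_smul hm0
  rcases le_or_gt t c with htc | hct
  · exact ⟨t • m, hconf t ⟨ht0, htc⟩, by rw [map_smul, hmnet]⟩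
  have hnet {v : V} (hv : v ≠ u) :
      netFlow hd tl (g - c • m) v = netFlow hd tl g v + if v = w then c else 0 := by
    simp [hv, hmnet, Pi.single_apply]
  have hg' (v : V) (hv : v ≠ u) : netFlow hd tl (g - c • m) v ≤ 0 := by
    rw [hnet hv]
    split_ifs with hvw
    · subst hvw
      linarith
    · simpa using hg v hv
  obtain ⟨h, hh, hhnet⟩ := exists_isConformal_netFlow_eq_smul (g - c • m) hwu hg' (t - c)
    (by linarith) (by rw [hnet hwu, if_pos rfl]; linarith)
  refine ⟨c • m + h, fun e => add_mem_uIcc_zero (hconf c ⟨hc0.le, le_rfl⟩ e) (hh e), ?_⟩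
  rw [map_add, map_smul, hmnet, hhnet, ← add_smul, add_sub_cancel]
termination_by #{e | g e ≠ 0}
decreasing_by
  exact hm.card_support_sub_smul_lt hge₀ hce₀

end Decomposition

theorem le_of_abs_le_abs_of_nonpos {α : Type*} [AddCommGroup α] [LinearOrder α]
    [IsOrderedAddMonoid α] {a b : α} (ha : a ≤ 0) (hb : b ≤ 0) (h : |a| ≤ |b|) : b ≤ a := by
  rwa [abs_of_nonpos ha, abs_of_nonpos hb, neg_le_neg_iff] at h

section Supply

variable {V : Type*} [Fintype V]

theorem assign_eq_sub_smul_single [DecidableEq V] (s : V → ℝ) (v : V) :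
    assign s v = s - (∑ x, s x) • Pi.single v 1 := by
  ext x
  by_cases hx : x = v
  · subst hx
    simp [assign, sum_erase_eq_sub (mem_univ x)]
  · simp [assign, hx]

theorem assign_eq_assign_add [DecidableEq V] (s : V → ℝ) (w u : V) :
    assign s w = assign s u + (∑ x, s x) • (Pi.single u 1 - Pi.single w 1) := by
  rw [assign_eq_sub_smul_single, assign_eq_sub_smul_single]
  module

theorem card_neg_mul_le_sum {d : V → ℝ} {w : V} (hd : ∀ v, d v ≤ 0) (hw : ∀ v, |d v| ≤ |d w|) :
    (#{v | d v < 0} : ℝ) * d w ≤ ∑ v, d v := by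
  rw [← sum_filter_of_ne fun v _ hv => (hd v).lt_of_ne hv, ← nsmul_eq_mul]
  exact card_nsmul_le_sum _ _ _ fun v _ => le_of_abs_le_abs_of_nonpos (hd v) (hd w) (hw v)

theorem exists_isConformal_netFlow_eq_of_netFlow_eq_assign {E : Type*} [Fintype E]
    [DecidableEq V] {hd tl : E → V} {d : V → ℝ} (hd0 : ∀ v, d v ≤ 0) {f : E → ℝ} {u : V}
    (hf : netFlow hd tl f = assign d u) (w : V) :
    ∃ h, IsConformal h f ∧ netFlow hd tl h = (-d w) • (Pi.single u 1 - Pi.single w 1) := by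
  rcases eq_or_ne w u with rfl | hwu
  · exact ⟨0, fun e => by simp, by simp⟩
  · exact exists_isConformal_netFlow_eq_smul f hwu (fun v hv => by simp [hf, assign, hv, hd0])
      (-d w) (by linarith [hd0 w]) (by simp [hf, assign, hwu])

end Supply

theorem master_source_lemma_general {V E : Type*} [Fintype V] [Fintype E] [DecidableEq V]
    (hd tl : E → V)
    (d : V → ℝ) (hdle : ∀ v, d v ≤ 0)
    (hcard : 1 < (univ.filter (fun v => d v < 0)).card)
    (θ : ℝ) (hθ : ((univ.filter (fun v => d v < 0)).card : ℝ) ≤ θ)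
    (w : V) (hw : ∀ v, |d v| ≤ |d w|)
    (u : V) (f : E → ℝ) (hf : satisfiesFlow hd tl f (assign d u)) :
    ∃ f' : E → ℝ, (∀ e, |f' e| ≤ |f e|) ∧
      satisfiesFlow hd tl f' (fun v => (1 / (θ - 1)) * assign d w v) := by
  classical
  rw [satisfiesFlow_iff] at hf
  set T := ∑ v, d v
  have hθ1 : 1 ≤ θ - 1 := by
    have : (2 : ℝ) ≤ #{v | d v < 0} := by exact_mod_cast hcard
    linarith
  set l := 1 / (θ - 1)
  have hl0 : 0 < l := by positivity
  have hl1 : l ≤ 1 := div_le_one_of_le₀ hθ1 (by linarith)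
  obtain ⟨v, hv⟩ := card_pos.1 (zero_lt_one.trans hcard)
  have hdw : d w < 0 :=
    (le_of_abs_le_abs_of_nonpos (hdle v) (hdle w) (hw v)).trans_lt ((mem_filter_univ v).1 hv)
  obtain ⟨h, hconf, hnet⟩ := exists_isConformal_netFlow_eq_of_netFlow_eq_assign hdle hf w
  set κ := l * (T / d w)
  have hκ0 : 0 ≤ κ :=
    mul_nonneg hl0.le (div_nonneg_of_nonpos (sum_nonpos fun v _ => hdle v) hdw.le)
  have hκ1 : κ ≤ 1 + l := calc
    κ ≤ l * θ := mul_le_mul_of_nonneg_left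
      (((div_le_iff_of_neg hdw).2 (card_neg_mul_le_sum hdle hw)).trans hθ) hl0.le
    _ = 1 + l := by rw [← one_div_mul_cancel (by linarith : θ - 1 ≠ 0)]; ring
  have hκT : κ * d w = l * T := by rw [mul_assoc, div_mul_cancel₀ _ hdw.ne]
  refine ⟨l • f - κ • h, fun e => abs_mul_sub_mul_le (hconf e) hl0.le hl1 hκ0 hκ1, ?_⟩
  rw [satisfiesFlow_iff, map_sub, map_smul, map_smul, hf, hnet]
  change _ = l • assign d w
  rw [assign_eq_assign_add d w u]
  linear_combination (norm := module) hκT • (Pi.single u 1 - Pi.single w 1 : V → ℝ)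

/-- Lemma (master source): let `d` be a supply vector with source set
`S = {v | d v < 0}` of size `> 1`, let `θ ≥ |S|` and let `w` be a master source of
`d` (a vertex maximizing `|d v|`). Then for any vertex `u` and any flow `f`
satisfying `d ∘ u`, there is a flow `f'` edgewise dominated by `f` that
satisfies `(1/(θ-1)) • (d ∘ w)`. -/
theorem master_source_lemma {V E : Type*} [Fintype V] [Fintype E] [DecidableEq V]
    (hd tl : E → V) (c : E → ℝ) (hc : ∀ e, 0 ≤ c e)
    (d : V → ℝ) (hdle : ∀ v, d v ≤ 0)
    (hcard : 1 < (univ.filter (fun v => d v < 0)).card)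
    (θ : ℝ) (hθ : ((univ.filter (fun v => d v < 0)).card : ℝ) ≤ θ)
    (w : V) (hw : ∀ v, |d v| ≤ |d w|)
    (u : V) (f : E → ℝ) (hf : satisfiesFlow hd tl f (assign d u)) :
    ∃ f' : E → ℝ, (∀ e, |f' e| ≤ |f e|) ∧
      satisfiesFlow hd tl f' (fun v => (1 / (θ - 1)) * assign d w v) :=
  master_source_lemma_general hd tl d hdle hcard θ hθ w hw u f hf
end

section
/- Let S = {s_1,…,s_{3m}} be a multiset of positive integers and B = (Σ_i s_i)/m. Let G be the capacitated star with center r and leaves u_1,…,u_m, where every edge has capacity B. For 1≤i≤3m define the uni-source supply vector d_i with value −s_i at r and 0 elsewhere. Restrict the targets to the candidate set U = {u_1,…,u_m} of leaves, and let λ_U(G; ·) denote the maximum over targets chosen from U of the concurrent flow value. Then λ_U(G; d_1,…,d_{3m}) ≥ 1 if and only if S has an equi-partition, i.e., a partition S_1,…,S_m of S with Σ_{s∈S_j} s = B for every j. -/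
open Finset

/-- The optimum of the target location problem with restricted targets: targets
must be chosen from the candidate set given as the range of `emb : T → V`. -/
noncomputable def lamRes {V E ι T : Type*} [Fintype V] [Fintype E] [Fintype ι]
    [DecidableEq V]
    (hd tl : E → V) (c : E → ℝ) (emb : T → V) (s : ι → V → ℝ) : ℝ :=
  sSup {l : ℝ | 0 ≤ l ∧ ∃ (v : ι → T) (f : ι → E → ℝ),
    (∀ e, ∑ i, |f i e| ≤ c e) ∧
    ∀ i, satisfiesFlow hd tl (f i) (fun u => l * assign (s i) (emb (v i)) u)}

/-!
On a star whose edges point from the leaves to the centre, a uni-source supply vector with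
target leaf `t` forces its flow onto the single edge at `t`. So routing at rate `l` with targets
`v` is feasible iff `l` times the weight assigned to each leaf fits its edge capacity, and the
feasible rates form a finite union of closed intervals, one per target choice `v`. Hence the
optimum is attained: it is at least `1` iff some `v` loads every leaf by at most `B`, and since
the loads add up to `m B`, iff every load is exactly `B`.
-/

section StarFlow

variable {L : Type*} [Fintype L] [DecidableEq L]

theorem satisfiesFlow_star_iff (f : L → ℝ) (d : Option L → ℝ) :
    satisfiesFlow (fun _ : L => (none : Option L)) some f d ↔
      d none = ∑ j, f j ∧ ∀ j, d (some j) = -f j := by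
  refine ⟨fun h => ⟨by simpa using h none, fun j => by simpa using h (some j)⟩, ?_⟩
  rintro ⟨hnone, hsome⟩ (_ | j)
  · simpa using hnone
  · simpa using hsome j

theorem assign_uniSource (a : ℝ) (t : L) :
    assign (fun x : Option L => if x = none then -a else 0) (some t) =
      fun u => if u = none then -a else if u = some t then a else 0 := by
  funext u
  rcases u with _ | j
  · simp [assign]
  · by_cases hj : j = t
    · simp [assign, hj, Finset.sum_ite_eq']
    · simp [assign, hj]

theorem satisfiesFlow_star_uniSource_iff (l a : ℝ) (t : L) (f : L → ℝ) :
    satisfiesFlow (fun _ : L => (none : Option L)) some f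
        (fun u => l * assign (fun x : Option L => if x = none then -a else 0) (some t) u) ↔
      f = fun j => if j = t then -(l * a) else 0 := by
  rw [satisfiesFlow_star_iff, assign_uniSource]
  constructor
  · rintro ⟨-, hsome⟩
    funext j
    have := hsome j
    by_cases hj : j = t <;> simp [hj] at this ⊢ <;> linarith
  · rintro rfl
    refine ⟨by simp, fun j => ?_⟩
    by_cases hj : j = t <;> simp [hj]

end StarFlow

section StarLoad

variable {L ι : Type*} [DecidableEq L] [Fintype ι]

def starLoad (v : ι → L) (w : ι → ℝ) (j : L) : ℝ :=
  ∑ i ∈ univ.filter (fun i => v i = j), w i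

def starFeasibleRates (c : L → ℝ) (w : ι → ℝ) : Set ℝ :=
  {l | 0 ≤ l ∧ ∃ v : ι → L, ∀ j, l * starLoad v w j ≤ c j}

theorem sum_abs_star_flow (l : ℝ) (hl : 0 ≤ l) (w : ι → ℝ) (hw : ∀ i, 0 ≤ w i)
    (v : ι → L) (j : L) :
    ∑ i, |if j = v i then -(l * w i) else 0| = l * starLoad v w j := by
  rw [starLoad, Finset.mul_sum, Finset.sum_filter]
  refine Finset.sum_congr rfl fun i _ => ?_
  by_cases h : v i = j
  · simp [h, abs_of_nonneg (mul_nonneg hl (hw i))]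
  · simp [h, Ne.symm h]

variable [Fintype L]

theorem lamRes_star (c : L → ℝ) (w : ι → ℝ) (hw : ∀ i, 0 ≤ w i) :
    lamRes (fun _ : L => (none : Option L)) some c some
        (fun i (x : Option L) => if x = none then -w i else 0) =
      sSup (starFeasibleRates c w) := by
  unfold lamRes
  congr 1
  ext l
  simp only [Set.mem_ofPred_eq, starFeasibleRates, satisfiesFlow_star_uniSource_iff]
  refine and_congr_right fun hl => ⟨?_, ?_⟩
  · rintro ⟨v, f, hcap, hf⟩
    obtain rfl : f = _ := funext hf
    exact ⟨v, fun j => sum_abs_star_flow l hl w hw v j ▸ hcap j⟩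
  · rintro ⟨v, hv⟩
    exact ⟨v, _, fun j => (sum_abs_star_flow l hl w hw v j).symm ▸ hv j, fun _ => rfl⟩

theorem sum_starLoad (v : ι → L) (w : ι → ℝ) : ∑ j, starLoad v w j = ∑ i, w i :=
  Finset.sum_fiberwise univ v w

theorem mul_sum_le_of_mem_starFeasibleRates {c : L → ℝ} {w : ι → ℝ} {l : ℝ}
    (hl : l ∈ starFeasibleRates c w) : l * ∑ i, w i ≤ ∑ j, c j := by
  obtain ⟨-, v, hv⟩ := hl
  rw [← sum_starLoad v, Finset.mul_sum]
  exact Finset.sum_le_sum fun j _ => hv j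

theorem isClosed_starFeasibleRates (c : L → ℝ) (w : ι → ℝ) :
    IsClosed (starFeasibleRates c w) := by
  have : starFeasibleRates c w =
      Set.Ici 0 ∩ ⋃ v : ι → L, ⋂ j, {l | l * starLoad v w j ≤ c j} := by
    ext l
    simp [starFeasibleRates]
  rw [this]
  exact isClosed_Ici.inter <| isClosed_iUnion_of_finite fun v => isClosed_iInter fun j =>
    isClosed_le (continuous_id.mul continuous_const) continuous_const

theorem one_le_sSup_starFeasibleRates_iff (B : ℝ) (w : ι → ℝ) (hw : ∀ i, 0 ≤ w i)
    (hpos : 0 < ∑ i, w i) (hB : Fintype.card L * B = ∑ i, w i) :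
    1 ≤ sSup (starFeasibleRates (fun _ : L => B) w) ↔ ∃ p : ι → L, ∀ j, starLoad p w j = B := by
  set S := starFeasibleRates (fun _ : L => B) w
  have hbdd : BddAbove S := ⟨1, fun l hl => by
    have := mul_sum_le_of_mem_starFeasibleRates hl
    rw [Finset.sum_const, Finset.card_univ, nsmul_eq_mul, hB] at this
    nlinarith⟩
  constructor
  · intro h
    have hne : S.Nonempty := Set.nonempty_iff_ne_empty.2 fun hS => by
      rw [hS, Real.sSup_empty] at h
      exact absurd h zero_lt_one.not_ge
    obtain ⟨-, v, hv⟩ := (isClosed_starFeasibleRates _ w).csSup_mem hne hbdd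
    have hle : ∀ j, starLoad v w j ≤ B := fun j =>
      (le_mul_of_one_le_left (Finset.sum_nonneg fun i _ => hw i) h).trans (hv j)
    refine ⟨v, fun j => (Finset.sum_eq_sum_iff_of_le fun j _ => hle j).mp ?_ j (mem_univ j)⟩
    rw [sum_starLoad, Finset.sum_const, Finset.card_univ, nsmul_eq_mul, hB]
  · rintro ⟨p, hp⟩
    exact le_csSup hbdd ⟨zero_le_one, p, fun j => by simp [hp j]⟩

end StarLoad

/-- Theorem (restricted targets on stars with uni-source supply vectors): consider
the star with center `r = none` and `m` leaves (every edge of capacity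
`B = (∑ s)/m`, oriented towards the center), and the `3m` uni-source supply vectors
`d_i` with value `-s_i` at the center. With targets restricted to the leaves, the
optimum of the target location problem is at least `1` iff the multiset
`s_0, …, s_{3m-1}` of positive integers admits an equi-partition into `m` parts of
equal sum `B`. -/
theorem star_restricted_partition (m : ℕ) (hm : 0 < m) (s : Fin (3 * m) → ℕ)
    (hs : ∀ i, 0 < s i) :
    1 ≤ lamRes (fun _ : Fin m => (none : Option (Fin m)))
          (fun j : Fin m => (some j : Option (Fin m)))
          (fun _ : Fin m => (∑ i, (s i : ℝ)) / m)
          (fun j : Fin m => (some j : Option (Fin m)))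
          (fun (i : Fin (3 * m)) (v : Option (Fin m)) =>
            if v = none then -(s i : ℝ) else 0)
      ↔ ∃ p : Fin (3 * m) → Fin m,
          ∀ j, ∑ i ∈ univ.filter (fun i => p i = j), (s i : ℝ)
            = (∑ i, (s i : ℝ)) / m := by
  have hpos : 0 < ∑ i, (s i : ℝ) :=
    Finset.sum_pos (fun i _ => Nat.cast_pos.mpr (hs i)) ⟨⟨0, by omega⟩, mem_univ _⟩
  rw [lamRes_star _ _ fun i => Nat.cast_nonneg (s i)]
  refine one_le_sSup_starFeasibleRates_iff _ _ (fun i => Nat.cast_nonneg (s i)) hpos ?_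
  rw [Fintype.card_fin]
  field_simp
end

section
/- Let G=(V,E) be an undirected graph with V={v_1,…,v_k}. Build the capacitated undirected graph G' with vertex set V ∪ E ∪ {w_e : e∈E}, edges ⟨v,e⟩ for each vertex v incident to edge e in G and ⟨e,w_e⟩ for each e∈E, all of capacity 1. For 1≤i≤k define the supply vector d_i on G' with value −1 at v_i and at w_e for every edge e of G incident to v_i, and 0 elsewhere. Then for any index set I ⊆ {1,…,k}: there exist targets (u_i)_{i∈I} in G' and a valid multi-commodity flow satisfying the demand vectors (d_i∘u_i)_{i∈I} if and only if {v_i : i∈I} is an independent set of G. -/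
/-!
In `G'` the vertex `w_e` is a leaf hanging off `e`. A commodity `i` with `v_i ∈ e` therefore
moves a full unit across the edge `⟨e, w_e⟩`: either `w_e` is a source of one unit, or it is
the target and absorbs at least the unit supplied at `v_i`. Two adjacent vertices of `I`
would overload that edge of capacity one. Conversely, for an independent set let each
commodity target its own vertex `v_i` and route the unit at `w_e` along `w_e → e → v_i`: an
edge `⟨v, e⟩` carries only commodity `v`, and `⟨e, w_e⟩` only the at most one commodity whose
vertex is an endpoint of `e`.
-/

open Finset

section MIS

variable {V : Type*} [Fintype V] [DecidableEq V] (G : SimpleGraph V) [DecidableRel G.Adj]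

/-- Head map of the graph `G'` built from `G` for the reduction from maximum
independent set: vertices are `V ⊕ E ⊕ {w_e : e ∈ E}`; edges of the first kind join
a vertex `v` of `G` (the tail) to each edge `e` of `G` incident to it (the head);
edges of the second kind join `e` (the tail) to `w_e` (the head). -/
def misHd :
    ({p : V × G.edgeFinset // p.1 ∈ (p.2.1 : Sym2 V)} ⊕ G.edgeFinset)
      → V ⊕ (G.edgeFinset ⊕ G.edgeFinset)
  | Sum.inl p => Sum.inr (Sum.inl p.1.2)
  | Sum.inr e => Sum.inr (Sum.inr e)

/-- Tail map of the graph `G'` built from `G`. -/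
def misTl :
    ({p : V × G.edgeFinset // p.1 ∈ (p.2.1 : Sym2 V)} ⊕ G.edgeFinset)
      → V ⊕ (G.edgeFinset ⊕ G.edgeFinset)
  | Sum.inl p => Sum.inl p.1.1
  | Sum.inr e => Sum.inr (Sum.inl e)

/-- The supply vector associated with a vertex `v` of `G`: value `-1` at (the copy
of) `v` and at `w_e` for every edge `e` of `G` incident to `v`, and `0` elsewhere. -/
def misSupply (v : V) : V ⊕ (G.edgeFinset ⊕ G.edgeFinset) → ℝ
  | Sum.inl u => if u = v then -1 else 0
  | Sum.inr (Sum.inl _) => 0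
  | Sum.inr (Sum.inr e) => if v ∈ (e.1 : Sym2 V) then -1 else 0

section Flow

variable {α ε : Type*} [Fintype ε] [DecidableEq α] {hd tl : ε → α} {f : ε → ℝ} {d : α → ℝ}

theorem satisfiesFlow.apply_eq_of_leaf (h : satisfiesFlow hd tl f d) {w : α} {e₀ : ε}
    (hhd : ∀ e, hd e = w ↔ e = e₀) (htl : ∀ e, tl e ≠ w) : d w = f e₀ := by
  rw [h w]
  simp only [htl, if_false, sum_const_zero, sub_zero]
  rw [Fintype.sum_eq_single e₀ (fun e he => if_neg (mt (hhd e).1 he)), if_pos ((hhd e₀).2 rfl)]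

end Flow

section Assign

variable {α : Type*} [Fintype α] [DecidableEq α]

theorem assign_self (s : α → ℝ) (v : α) : assign s v v = -∑ w ∈ univ.erase v, s w :=
  if_pos rfl

theorem assign_of_ne (s : α → ℝ) {u v : α} (h : u ≠ v) : assign s v u = s u :=
  if_neg h

-- A target absorbs at least the supply of `y`; any other vertex keeps its own supply.
theorem one_le_abs_assign {s : α → ℝ} (hs : ∀ w, s w ≤ 0) {x y : α} (hxy : x ≠ y)
    (hx : s x ≤ -1) (hy : s y ≤ -1) (u : α) : 1 ≤ |assign s u x| := by
  by_cases hu : x = u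
  · subst hu
    have : -s y ≤ ∑ w ∈ univ.erase x, -s w :=
      single_le_sum (fun w _ => neg_nonneg.2 (hs w)) (mem_erase.2 ⟨hxy.symm, mem_univ y⟩)
    rw [assign_self, ← sum_neg_distrib]
    exact le_abs.2 (Or.inl (by linarith))
  · rw [assign_of_ne s hu]
    exact le_abs.2 (Or.inr (by linarith))

end Assign

theorem SimpleGraph.card_filter_mem_le_one {W : Type*} [DecidableEq W] (H : SimpleGraph W)
    {I : Finset W} (hI : ∀ i ∈ I, ∀ j ∈ I, ¬ H.Adj i j) {e : Sym2 W} (he : e ∈ H.edgeSet) :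
    #{v ∈ I | v ∈ e} ≤ 1 := by
  refine card_le_one.2 fun a ha b hb => by_contra fun hab => ?_
  simp only [mem_filter] at ha hb
  rw [(Sym2.mem_and_mem_iff hab).1 ⟨ha.2, hb.2⟩] at he
  exact hI a ha.1 b hb.1 he

theorem misSupply_nonpos (v : V) (x : V ⊕ (G.edgeFinset ⊕ G.edgeFinset)) :
    misSupply G v x ≤ 0 := by
  unfold misSupply
  split <;> (try split_ifs) <;> norm_num

theorem one_le_abs_apply_inr_of_satisfiesFlow {v : V} {e : G.edgeFinset} (hv : v ∈ (e : Sym2 V))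
    {u : V ⊕ (G.edgeFinset ⊕ G.edgeFinset)} {f : _ → ℝ}
    (hf : satisfiesFlow (misHd G) (misTl G) f (assign (misSupply G v) u)) :
    1 ≤ |f (Sum.inr e)| := by
  rw [← hf.apply_eq_of_leaf (w := Sum.inr (Sum.inr e)) (by rintro (p | e') <;> simp [misHd])
    (by rintro (p | e') <;> simp [misTl])]
  exact one_le_abs_assign (misSupply_nonpos G v) (y := Sum.inl v) (by simp)
    (by simp [misSupply, hv]) (by simp [misSupply]) u

theorem not_adj_of_valid_flow {I : Finset V} {u : I → V ⊕ (G.edgeFinset ⊕ G.edgeFinset)}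
    {f : I → ({p : V × G.edgeFinset // p.1 ∈ (p.2.1 : Sym2 V)} ⊕ G.edgeFinset) → ℝ}
    (hcap : ∀ e, ∑ i, |f i e| ≤ 1)
    (hflow : ∀ i, satisfiesFlow (misHd G) (misTl G) (f i) (assign (misSupply G i.1) (u i))) :
    ∀ i ∈ I, ∀ j ∈ I, ¬ G.Adj i j := by
  intro i hi j hj hij
  let e : G.edgeFinset := ⟨s(i, j), G.mem_edgeFinset.2 hij⟩
  have hne : (⟨i, hi⟩ : I) ≠ ⟨j, hj⟩ := fun h => hij.ne (congrArg Subtype.val h)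
  have hpair : |f ⟨i, hi⟩ (Sum.inr e)| + |f ⟨j, hj⟩ (Sum.inr e)| ≤ 1 :=
    calc _ = ∑ k ∈ {⟨i, hi⟩, ⟨j, hj⟩}, |f k (Sum.inr e)| := (sum_pair hne).symm
      _ ≤ ∑ k, |f k (Sum.inr e)| :=
        sum_le_sum_of_subset_of_nonneg (subset_univ _) fun k _ _ => abs_nonneg _
      _ ≤ 1 := hcap _
  linarith [one_le_abs_apply_inr_of_satisfiesFlow G (e := e) (Sym2.mem_mk_left i j)
      (hflow ⟨i, hi⟩),
    one_le_abs_apply_inr_of_satisfiesFlow G (e := e) (Sym2.mem_mk_right i j) (hflow ⟨j, hj⟩)]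

-- Commodity `v` sends one unit from each `w_e` with `v ∈ e` along `w_e → e → v`, i.e. against
-- the orientation of both edges.
def misFlow (v : V) : {p : V × G.edgeFinset // p.1 ∈ (p.2.1 : Sym2 V)} ⊕ G.edgeFinset → ℝ
  | Sum.inl p => if p.1.1 = v then -1 else 0
  | Sum.inr e => if v ∈ (e.1 : Sym2 V) then -1 else 0

theorem sum_abs_misFlow_le_one {I : Finset V} (hI : ∀ i ∈ I, ∀ j ∈ I, ¬ G.Adj i j)
    (x : {p : V × G.edgeFinset // p.1 ∈ (p.2.1 : Sym2 V)} ⊕ G.edgeFinset) :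
    ∑ i : I, |misFlow G i x| ≤ 1 := by
  rw [sum_coe_sort I fun i => |misFlow G i x|]
  rcases x with p | e
  · simp only [misFlow, apply_ite, abs_neg, abs_one, abs_zero, sum_ite_eq]
    split_ifs <;> norm_num
  · simp only [misFlow, apply_ite, abs_neg, abs_one, abs_zero, sum_boole]
    exact_mod_cast SimpleGraph.card_filter_mem_le_one G hI (G.mem_edgeFinset.1 e.2)

theorem sum_incidence (F : V → G.edgeFinset → ℝ) :
    ∑ p : {p : V × G.edgeFinset // p.1 ∈ (p.2.1 : Sym2 V)}, F p.1.1 p.1.2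
      = ∑ v, ∑ e ∈ univ.filter fun e : G.edgeFinset => v ∈ (e : Sym2 V), F v e := by
  simp only [sum_filter]
  rw [← Fintype.sum_prod_type', ← sum_filter, ← sum_subtype_eq_sum_filter, subtype_univ]

theorem misFlow_satisfiesFlow (v : V) :
    satisfiesFlow (misHd G) (misTl G) (misFlow G v) (assign (misSupply G v) (Sum.inl v)) := by
  rintro (u | e | e) <;>
    simp only [misHd, misTl, misFlow, Fintype.sum_sum_type, reduceCtorEq, Sum.inl.injEq,
      Sum.inr.injEq, if_false, sum_const_zero, add_zero, zero_add, sub_zero, zero_sub,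
      Fintype.sum_ite_eq']
  · rw [sum_incidence G fun a _ => if a = u then if a = v then -1 else 0 else 0]
    by_cases huv : u = v
    · subst huv
      simp [assign, misSupply, Fintype.sum_sum_type, sum_ite_irrel, ← sum_filter]
    · simp [assign, misSupply, huv, sum_ite_irrel]
  · rw [sum_incidence G fun a b => if b = e then if a = v then -1 else 0 else 0]
    simp only [assign, reduceCtorEq, if_false, misSupply, ← ite_and, and_comm]
    simp [ite_and, sum_ite_irrel]
  · simp [assign, misSupply]

/-- Theorem (reduction from maximum independent set to maxf-LoMuF): for any index
set `I` of vertices of `G`, there exist targets in `G'` and a valid multi-commodity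
flow (all capacities being `1`) satisfying the demand vectors `d_i ∘ u_i` for
`i ∈ I` iff `I` is an independent set of `G`. -/
theorem mis_reduction (I : Finset V) :
    (∃ (u : {v // v ∈ I} → V ⊕ (G.edgeFinset ⊕ G.edgeFinset))
        (f : {v // v ∈ I}
          → ({p : V × G.edgeFinset // p.1 ∈ (p.2.1 : Sym2 V)} ⊕ G.edgeFinset) → ℝ),
        (∀ e, ∑ i, |f i e| ≤ 1) ∧
        ∀ i, satisfiesFlow (misHd G) (misTl G) (f i)
          (assign (misSupply G i.1) (u i)))
      ↔ ∀ i ∈ I, ∀ j ∈ I, ¬ G.Adj i j :=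
  ⟨fun ⟨_, _, hcap, hflow⟩ => not_adj_of_valid_flow G hcap hflow, fun hI =>
    ⟨fun i => Sum.inl i.1, fun i => misFlow G i.1, sum_abs_misFlow_le_one G hI,
      fun i => misFlow_satisfiesFlow G i.1⟩⟩

end MIS
end
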